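/- Gibbs/variational inequality for Perron eigenvectors: let E = (e^{a_{ij}}) be the entrywise exponential of a k×k real matrix A, let v be a left eigenvector with positive entries satisfying ∑_i v_i e^{a_{ij}} = β v_j for all j (β > 0), let Q = (q_{ij}) be a column-stochastic matrix with positive entries and π a probability vector with Qπ = π. Then -∑_j π_j ∑_i q_{ij} log q_{ij} + ∑_j π_j ∑_i q_{ij} a_{ij} ≤ log β. -/

import Mathlib

open Real

/-! Column by column, Jensen's inequality for `log` gives
`∑ᵢ qᵢⱼ (log vᵢ + aᵢⱼ - log qᵢⱼ) ≤ log (∑ᵢ vᵢ e^{aᵢⱼ}) = log β + log vⱼ`.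
Averaging over `j` with weights `πⱼ`, stationarity of `π` turns the term `∑ⱼ πⱼ ∑ᵢ qᵢⱼ log vᵢ`
into `∑ᵢ πᵢ log vᵢ`, which cancels against the right-hand side. -/

theorem Real.sum_mul_log_div_le_log_sum {ι : Type*} (s : Finset ι) (q w : ι → ℝ)
    (hq : ∀ i ∈ s, 0 < q i) (hqs : ∑ i ∈ s, q i = 1) (hw : ∀ i ∈ s, 0 < w i) :
    ∑ i ∈ s, q i * log (w i / q i) ≤ log (∑ i ∈ s, w i) := by
  have jensen := strictConcaveOn_log_Ioi.concaveOn.le_map_sum (t := s) (w := q)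
    (p := fun i => w i / q i) (fun i hi => (hq i hi).le) hqs
    (fun i hi => div_pos (hw i hi) (hq i hi))
  simp only [smul_eq_mul] at jensen
  calc ∑ i ∈ s, q i * log (w i / q i)
      ≤ log (∑ i ∈ s, q i * (w i / q i)) := jensen
    _ = log (∑ i ∈ s, w i) := by
        congr 1
        exact Finset.sum_congr rfl fun i hi => mul_div_cancel₀ _ (hq i hi).ne'

theorem Real.sum_mul_log_add_sub_log_le {ι : Type*} [Fintype ι] (q v a : ι → ℝ)
    (hq : ∀ i, 0 < q i) (hqs : ∑ i, q i = 1) (hv : ∀ i, 0 < v i) :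
    ∑ i, q i * (log (v i) + a i - log (q i)) ≤ log (∑ i, v i * exp (a i)) := by
  have hw : ∀ i, 0 < v i * exp (a i) := fun i => mul_pos (hv i) (exp_pos _)
  calc ∑ i, q i * (log (v i) + a i - log (q i))
      = ∑ i, q i * log (v i * exp (a i) / q i) := by
        refine Finset.sum_congr rfl fun i _ => ?_
        rw [log_div (hw i).ne' (hq i).ne', log_mul (hv i).ne' (exp_pos _).ne', log_exp]
    _ ≤ log (∑ i, v i * exp (a i)) :=
        sum_mul_log_div_le_log_sum _ q _ (fun i _ => hq i) hqs (fun i _ => hw i)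

theorem Matrix.sum_stationary_mul_sum {ι : Type*} [Fintype ι] (Q : Matrix ι ι ℝ) (p f : ι → ℝ)
    (hstat : ∀ i, ∑ j, Q i j * p j = p i) :
    ∑ j, p j * ∑ i, Q i j * f i = ∑ i, p i * f i := by
  simp_rw [Finset.mul_sum]
  rw [Finset.sum_comm]
  refine Finset.sum_congr rfl fun i _ => ?_
  rw [← hstat i, Finset.sum_mul]
  exact Finset.sum_congr rfl fun j _ => by ring

theorem stmt18 (k : ℕ) (A : Matrix (Fin k) (Fin k) ℝ)
    (v : Fin k → ℝ) (hv : ∀ i, 0 < v i)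
    (β : ℝ) (hβ : 0 < β)
    (heig : ∀ j, ∑ i, v i * Real.exp (A i j) = β * v j)
    (Q : Matrix (Fin k) (Fin k) ℝ) (hQ : ∀ i j, 0 < Q i j)
    (hQcol : ∀ j, ∑ i, Q i j = 1)
    (pv : Fin k → ℝ) (hpv : ∀ j, 0 ≤ pv j) (hpvsum : ∑ j, pv j = 1)
    (hstat : ∀ i, ∑ j, Q i j * pv j = pv i) :
    -∑ j, pv j * ∑ i, Q i j * Real.log (Q i j)
      + ∑ j, pv j * ∑ i, Q i j * A i j ≤ Real.log β := by
  have column : ∀ j, ∑ i, Q i j * (log (v i) + A i j - log (Q i j)) ≤ log β + log (v j) :=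
    fun j => by
      have h := sum_mul_log_add_sub_log_le (Q · j) v (A · j) (hQ · j) (hQcol j) hv
      rwa [heig j, log_mul hβ.ne' (hv j).ne'] at h
  have averaged : ∑ j, pv j * ∑ i, Q i j * (log (v i) + A i j - log (Q i j))
      ≤ ∑ j, pv j * (log β + log (v j)) :=
    Finset.sum_le_sum fun j _ => mul_le_mul_of_nonneg_left (column j) (hpv j)
  simp only [mul_sub, mul_add, Finset.sum_sub_distrib, Finset.sum_add_distrib,
    ← Finset.sum_mul, hpvsum, one_mul, Matrix.sum_stationary_mul_sum Q pv _ hstat] at averaged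
  linarith
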